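/- Let G be a connected multigraph and γ the edge-subgraph spanned by S ⊆ E(G). Then the monomials of minimal degree in the variables {x_e : e ∈ S} appearing in ψ_G have degree exactly equal to the first Betti number |γ| of γ, provided γ contains at least one spanning forest that extends to a spanning tree of G; equivalently, min over spanning trees T of G of |S ∖ T| equals |γ|. -/

import Mathlib

/-!
For any spanning tree `T`, the edges `S ∩ T` form a forest, so counting vertices through its
components gives `|S ∩ T| + c(S ∩ T) = |V|`, i.e. `β(S) = |S ∖ T| - (c(S ∩ T) - c(S))`. Since
`S ∩ T ⊆ S` has at least as many components as `S`, this is `≤ |S ∖ T|`; if `T` contains a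
spanning forest of `S`, then `S ∩ T` is sandwiched between that forest and `S`, all three have the
same number of components, and equality holds.
-/

open MvPolynomial

structure MGraph (V E : Type) where
  ends : E → Sym2 V

namespace MGraph

variable {V E : Type} (G : MGraph V E)

def adj (S : Set E) (u v : V) : Prop := ∃ e ∈ S, G.ends e = s(u, v)

def conn (S : Set E) (u v : V) : Prop := Relation.ReflTransGen (G.adj S) u v

def Connected : Prop := ∀ u v : V, G.conn Set.univ u v

def IsForest (S : Set E) : Prop :=
  ∀ e ∈ S, ∀ u v : V, G.ends e = s(u, v) → ¬ G.conn (S \ {e}) u v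

def IsSpanningTree (T : Set E) : Prop := G.IsForest T ∧ ∀ u v : V, G.conn T u v

def IsSpanningForestOf (S T : Set E) : Prop :=
  T ⊆ S ∧ G.IsForest T ∧ ∀ u v : V, G.conn S u v → G.conn T u v

noncomputable def psi : MvPolynomial E ℝ :=
  ∑ᶠ T ∈ {T : Set E | G.IsSpanningTree T}, ∏ᶠ e ∈ Tᶜ, (X e : MvPolynomial E ℝ)

noncomputable def psiSub (S : Set E) : MvPolynomial E ℝ :=
  ∑ᶠ T ∈ {T : Set E | G.IsSpanningForestOf S T}, ∏ᶠ e ∈ S \ T, (X e : MvPolynomial E ℝ)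

noncomputable def ncomp (S : Set E) : ℕ := Nat.card (Quot (G.adj S))

noncomputable def betti (S : Set E) : ℤ :=
  (Nat.card S : ℤ) - (Nat.card V : ℤ) + (G.ncomp S : ℤ)

noncomputable def rank : ℤ := G.betti Set.univ

def IsCore (S : Set E) : Prop := ∀ e ∈ S, G.betti (S \ {e}) < G.betti S

noncomputable def contract (S : Set E) : MGraph (Quot (G.adj S)) ↥(Sᶜ) :=
  ⟨fun e => (G.ends e.1).map (Quot.mk (G.adj S))⟩

open Classical in
noncomputable def deg (v : V) : ℕ :=
  ∑ᶠ e : E, if G.ends e = s(v, v) then 2 else if v ∈ G.ends e then 1 else 0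

noncomputable def sdd (d : ℤ) (S : Set E) : ℤ :=
  d * G.betti S - 2 * (Nat.card S : ℤ)

end MGraph

namespace MGraph

variable {V E : Type} {G : MGraph V E}

instance (S : Set E) : Std.Symm (G.adj S) where
  symm _ _ := fun ⟨e, he, hev⟩ => ⟨e, he, hev.trans Sym2.eq_swap⟩

instance (S : Set E) : Std.Symm (G.conn S) :=
  inferInstanceAs (Std.Symm (Relation.ReflTransGen _))

lemma conn_mono {S S' : Set E} (h : S ⊆ S') {u v : V} (huv : G.conn S u v) : G.conn S' u v :=
  Relation.ReflTransGen.mono (fun _ _ ⟨e, he, hev⟩ => ⟨e, h he, hev⟩) _ _ huv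

lemma IsForest.mono {S T : Set E} (hT : G.IsForest T) (h : S ⊆ T) : G.IsForest S :=
  fun e he u v hev hc => hT e (h he) u v hev (conn_mono (Set.sdiff_subset_sdiff_left h) hc)

lemma quot_mk_eq_iff {S : Set E} {u v : V} :
    Quot.mk (G.adj S) u = Quot.mk (G.adj S) v ↔ G.conn S u v := by
  rw [Quot.eq, Relation.EqvGen.eqvGen_eq_reflTransGen]
  rfl

lemma ncomp_le_ncomp_of_conn [Finite V] {S S' : Set E}
    (h : ∀ u v, G.conn S u v → G.conn S' u v) : G.ncomp S' ≤ G.ncomp S :=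
  Nat.card_le_card_of_surjective
    (Quot.lift (Quot.mk (G.adj S')) fun u v huv => quot_mk_eq_iff.2 (h u v (.single huv)))
    ((Quot.surjective_lift _).2 Quot.mk_surjective)

lemma ncomp_antitone [Finite V] : Antitone G.ncomp :=
  fun _ _ h => ncomp_le_ncomp_of_conn fun _ _ => conn_mono h

lemma ncomp_eq_of_isSpanningForestOf [Finite V] {S F : Set E} (h : G.IsSpanningForestOf S F) :
    G.ncomp F = G.ncomp S :=
  le_antisymm (ncomp_le_ncomp_of_conn h.2.2) (ncomp_antitone h.1)

lemma ncomp_empty [Finite V] : G.ncomp ∅ = Nat.card V := by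
  refine (Nat.card_eq_of_bijective (Quot.mk (G.adj ∅)) ⟨fun a b hab => ?_, Quot.mk_surjective⟩).symm
  induction quot_mk_eq_iff.1 hab with
  | refl => rfl
  | tail _ hbc => obtain ⟨_, ⟨⟩, _⟩ := hbc

lemma conn_diff_singleton_of_conn {F : Set E} {e : E} {u v a b : V} (huv : G.ends e = s(u, v))
    (hab : G.conn F a b) :
    G.conn (F \ {e}) a b ∨ (G.conn (F \ {e}) a u ∧ G.conn (F \ {e}) v b) ∨
      (G.conn (F \ {e}) a v ∧ G.conn (F \ {e}) u b) := by
  induction hab with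
  | refl => exact .inl .refl
  | @tail x y _ hxy ih =>
    obtain ⟨f, hf, hfxy⟩ := hxy
    by_cases hfe : f = e
    · subst hfe
      rcases Sym2.eq_iff.1 (huv.symm.trans hfxy) with ⟨rfl, rfl⟩ | ⟨rfl, rfl⟩
      · rcases ih with h | ⟨h, h'⟩ | ⟨h, -⟩
        exacts [.inr (.inl ⟨h, .refl⟩), .inl (h.trans (symm h')), .inl h]
      · rcases ih with h | ⟨h, -⟩ | ⟨h, h'⟩
        exacts [.inr (.inr ⟨h, .refl⟩), .inl h, .inl (h.trans (symm h'))]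
    · have hstep : G.adj (F \ {e}) x y := ⟨f, ⟨hf, hfe⟩, hfxy⟩
      rcases ih with h | ⟨h, h'⟩ | ⟨h, h'⟩
      exacts [.inl (h.tail hstep), .inr (.inl ⟨h, h'.tail hstep⟩), .inr (.inr ⟨h, h'.tail hstep⟩)]

/-- The components of `F` correspond to those of `F ∖ {e}` other than that of `v`, where
`e = uv`: the forest condition keeps `u` and `v` apart in `F ∖ {e}`. -/
lemma ncomp_diff_singleton [Finite V] {F : Set E} (hF : G.IsForest F) {e : E} (he : e ∈ F) :
    G.ncomp (F \ {e}) = G.ncomp F + 1 := by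
  obtain ⟨⟨u, v⟩, huv⟩ := Sym2.mk_surjective (G.ends e)
  replace huv : G.ends e = s(u, v) := huv.symm
  have hnuv : ¬ G.conn (F \ {e}) u v := hF e he u v huv
  let q : Quot (G.adj (F \ {e})) → Quot (G.adj F) :=
    Quot.mapRight fun _ _ ⟨f, hf, hfab⟩ => ⟨f, hf.1, hfab⟩
  have hq : Function.Bijective fun x : {x // x ≠ Quot.mk _ v} => q x.1 := by
    constructor
    · rintro ⟨x, hx⟩ ⟨y, hy⟩ hxy
      induction x using Quot.ind with | _ a => ?_
      induction y using Quot.ind with | _ b => ?_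
      rcases conn_diff_singleton_of_conn huv (quot_mk_eq_iff.1 hxy) with h | ⟨-, h⟩ | ⟨h, -⟩
      · exact Subtype.ext (quot_mk_eq_iff.2 h)
      · exact absurd (quot_mk_eq_iff.2 (symm h)) hy
      · exact absurd (quot_mk_eq_iff.2 h) hx
    · intro y
      induction y using Quot.ind with | _ w => ?_
      by_cases hw : G.conn (F \ {e}) w v
      · refine ⟨⟨Quot.mk _ u, fun h => hnuv (quot_mk_eq_iff.1 h)⟩, quot_mk_eq_iff.2 ?_⟩
        exact (Relation.ReflTransGen.single ⟨e, he, huv⟩).trans (conn_mono Set.sdiff_subset (symm hw))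
      · exact ⟨⟨Quot.mk _ w, fun h => hw (quot_mk_eq_iff.1 h)⟩, rfl⟩
  classical
  rw [ncomp, ncomp, ← Nat.card_eq_of_bijective _ hq, ← Finite.card_option,
    Nat.card_congr (Equiv.optionSubtypeNe _)]

lemma ncard_add_ncomp_of_isForest [Finite V] [Finite E] {F : Set E} (hF : G.IsForest F) :
    F.ncard + G.ncomp F = Nat.card V := by
  induction F, F.toFinite using Set.Finite.induction_on with
  | empty => rw [Set.ncard_empty, ncomp_empty, zero_add]
  | @insert e F he _ ih =>
    have hsplit := ncomp_diff_singleton hF (Set.mem_insert e F)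
    rw [Set.insert_sdiff_self_of_notMem he] at hsplit
    rw [Set.ncard_insert_of_notMem he, ← ih (hF.mono (Set.subset_insert e F)), hsplit]
    omega

lemma betti_eq_of_isForest [Finite V] [Finite E] {S F : Set E} (hF : G.IsForest F)
    (hFS : F ⊆ S) : G.betti S = Nat.card ↥(S \ F) - G.ncomp F + G.ncomp S := by
  have hV := ncard_add_ncomp_of_isForest hF
  have hS := Set.ncard_sdiff_add_ncard_of_subset hFS
  simp only [betti, Nat.card_coe_set_eq]
  omega

end MGraph

open MGraph in
theorem min_degree_in_subgraph_vars_general {V E : Type} [Finite V] [Finite E]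
    (G : MGraph V E) (S : Set E)
    (hext : ∃ F T : Set E, G.IsSpanningForestOf S F ∧ G.IsSpanningTree T ∧ F ⊆ T) :
    (∀ T : Set E, G.IsSpanningTree T → G.betti S ≤ (Nat.card ↥(S \ T) : ℤ)) ∧
    (∃ T : Set E, G.IsSpanningTree T ∧ (Nat.card ↥(S \ T) : ℤ) = G.betti S) := by
  have hbetti (T : Set E) (hT : G.IsSpanningTree T) :
      G.betti S = Nat.card ↥(S \ T) - G.ncomp (S ∩ T) + G.ncomp S := by
    rw [← Set.sdiff_self_inter]
    exact betti_eq_of_isForest (hT.1.mono Set.inter_subset_right) Set.inter_subset_left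
  refine ⟨fun T hT => ?_, ?_⟩
  · have := ncomp_antitone (G := G) (Set.inter_subset_left : S ∩ T ⊆ S)
    rw [hbetti T hT]
    omega
  · obtain ⟨F, T, hF, hT, hFT⟩ := hext
    have hcomp : G.ncomp (S ∩ T) = G.ncomp S :=
      le_antisymm ((ncomp_antitone (Set.subset_inter hF.1 hFT)).trans
        (ncomp_eq_of_isSpanningForestOf hF).le) (ncomp_antitone Set.inter_subset_left)
    exact ⟨T, hT, by rw [hbetti T hT, hcomp]; ring⟩

open MGraph in
/-- the minimal degree in the variables of S ⊆ E(G) of a monomial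
of ψ_G, i.e. the minimum of |S ∖ T| over spanning trees T of G, equals the first
Betti number of the subgraph γ spanned by S, provided some maximal spanning
forest of γ extends to a spanning tree of G. -/
theorem min_degree_in_subgraph_vars {V E : Type} [Finite V] [Finite E]
    (G : MGraph V E) (hG : G.Connected) (S : Set E)
    (hext : ∃ F T : Set E, G.IsSpanningForestOf S F ∧ G.IsSpanningTree T ∧ F ⊆ T) :
    (∀ T : Set E, G.IsSpanningTree T → G.betti S ≤ (Nat.card ↥(S \ T) : ℤ)) ∧
    (∃ T : Set E, G.IsSpanningTree T ∧ (Nat.card ↥(S \ T) : ℤ) = G.betti S) :=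
  min_degree_in_subgraph_vars_general G S hext
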